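/- arXiv:1307.7239 — 5 statements merged into one kernel-verified Lean document; each statement's English description precedes it below -/
import Mathlib

section
/- For every symplectic matrix A ∈ Sp(2n,ℝ), the matrix C_A := ½(A − J₀AJ₀) commutes with J₀ and is invertible. -/
open Matrix

noncomputable section

lemma dotProduct_self_nonneg' {ι : Type*} [Fintype ι] (v : ι → ℝ) : 0 ≤ v ⬝ᵥ v :=
  Finset.sum_nonneg fun i _ => mul_self_nonneg _

/-- `2n × 2n` real matrices, with rows/columns indexed by `Fin n ⊕ Fin n`. -/
abbrev MatN (n : ℕ) := Matrix (Fin n ⊕ Fin n) (Fin n ⊕ Fin n) ℝ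

/-- For every symplectic matrix `A`, the matrix `C_A := ½(A - J₀ A J₀)`
(the ℂ-linear part of `A`) commutes with `J₀` and is invertible. -/
theorem cLinearPart_commutes_and_invertible (n : ℕ) (A : MatN n)
    (hA : Aᵀ * Matrix.J (Fin n) ℝ * A = Matrix.J (Fin n) ℝ) :
    ((1/2 : ℝ) • (A - Matrix.J (Fin n) ℝ * A * Matrix.J (Fin n) ℝ)) * Matrix.J (Fin n) ℝ =
      Matrix.J (Fin n) ℝ * ((1/2 : ℝ) • (A - Matrix.J (Fin n) ℝ * A * Matrix.J (Fin n) ℝ)) ∧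
    IsUnit ((1/2 : ℝ) • (A - Matrix.J (Fin n) ℝ * A * Matrix.J (Fin n) ℝ)) := by
  set Jm := Matrix.J (Fin n) ℝ with hJ
  have hJ2 : Jm * Jm = -1 := Matrix.J_squared _ _
  constructor
  · -- commutation
    rw [Matrix.smul_mul, Matrix.mul_smul]
    congr 1
    have h1 : (A - Jm * A * Jm) * Jm = A * Jm + Jm * A := by
      rw [Matrix.sub_mul]
      have : Jm * A * Jm * Jm = -(Jm * A) := by
        rw [mul_assoc, hJ2, Matrix.mul_neg, mul_one]
      rw [this, sub_neg_eq_add]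
    have h2 : Jm * (A - Jm * A * Jm) = Jm * A + A * Jm := by
      rw [Matrix.mul_sub]
      have : Jm * (Jm * A * Jm) = -(A * Jm) := by
        rw [← mul_assoc, ← mul_assoc, hJ2, Matrix.neg_mul, one_mul, Matrix.neg_mul]
      rw [this, sub_neg_eq_add]
    rw [h1, h2, add_comm]
  · -- invertibility
    rw [Matrix.isUnit_iff_isUnit_det, isUnit_iff_ne_zero]
    intro hdet
    obtain ⟨v, hv0, hv⟩ := (Matrix.exists_mulVec_eq_zero_iff.mpr hdet)
    -- from C v = 0, get A v = (Jm * A * Jm) v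
    have hAv : A *ᵥ v = (Jm * A * Jm) *ᵥ v := by
      have := hv
      rw [Matrix.smul_mulVec, smul_eq_zero] at this
      rcases this with h | h
      · norm_num at h
      · rw [Matrix.sub_mulVec, sub_eq_zero] at h
        exact h
    set w := Jm *ᵥ v with hw
    -- symplectic identity: (A *ᵥ w) ⬝ᵥ ((Jm * A) *ᵥ v) = w ⬝ᵥ w
    have key1 : (A *ᵥ w) ⬝ᵥ ((Jm * A) *ᵥ v) = w ⬝ᵥ w := by
      have : (A *ᵥ w) ⬝ᵥ ((Jm * A) *ᵥ v) = (Aᵀ *ᵥ ((Jm * A) *ᵥ v)) ⬝ᵥ w := by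
        rw [dotProduct_comm, Matrix.dotProduct_mulVec, ← Matrix.mulVec_transpose]
      rw [this, Matrix.mulVec_mulVec, ← mul_assoc, hA, dotProduct_comm]
    -- but (Jm * A) *ᵥ v = -(A *ᵥ w)
    have key2 : (Jm * A) *ᵥ v = -(A *ᵥ w) := by
      have : (Jm * A) *ᵥ v = Jm *ᵥ (A *ᵥ v) := (Matrix.mulVec_mulVec _ _ _).symm
      rw [this, hAv, Matrix.mulVec_mulVec, ← mul_assoc, ← mul_assoc, hJ2]
      have : (-1 : MatN n) * A * Jm = -(A * Jm) := by rw [neg_one_mul, Matrix.neg_mul]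
      rw [this, Matrix.neg_mulVec, ← Matrix.mulVec_mulVec]
    rw [key2, dotProduct_neg] at key1
    have h1 : (0:ℝ) ≤ w ⬝ᵥ w := dotProduct_self_nonneg' w
    have h2 : (0:ℝ) ≤ (A *ᵥ w) ⬝ᵥ (A *ᵥ w) := dotProduct_self_nonneg' _
    have hww : w ⬝ᵥ w = 0 := le_antisymm (by linarith) h1
    have hw0 : w = 0 := dotProduct_self_eq_zero.mp hww
    -- then v = 0, contradiction
    apply hv0
    have : (-Jm) *ᵥ w = v := by
      rw [hw, Matrix.mulVec_mulVec, Matrix.neg_mul, hJ2, neg_neg, Matrix.one_mulVec]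
    rw [← this, hw0, Matrix.mulVec_zero]
end
end

section
/- Let A ∈ Sp(2n,ℝ) and set C_A := ½(A − J₀AJ₀). Then for every v ∈ ℝ^{2n}, 4 Ω₀(C_A v, J₀ C_A v) = 2 Ω₀(v, J₀v) + Ω₀(Av, J₀Av) + Ω₀(AJ₀v, J₀AJ₀v), and this quantity is strictly positive whenever v ≠ 0. -/
open Matrix

noncomputable section

/-- `ℝ^{2n}`, with coordinates indexed by `Fin n ⊕ Fin n`. -/
abbrev Vn (n : ℕ) := (Fin n ⊕ Fin n) → ℝ

/-- the standard symplectic form `Ω₀(v,w) = ⟨J₀ v, w⟩` on `ℝ^{2n}` -/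
def Om (n : ℕ) (v w : Vn n) : ℝ := (Matrix.J (Fin n) ℝ).mulVec v ⬝ᵥ w

lemma dp_self_nonneg {m : Type*} [Fintype m] (x : m → ℝ) : 0 ≤ x ⬝ᵥ x :=
  Finset.sum_nonneg fun i _ => mul_self_nonneg (x i)

lemma dp_gram (n : ℕ) (N : MatN n) (v : Vn n) :
    (N.mulVec v) ⬝ᵥ (N.mulVec v) = v ⬝ᵥ ((Nᵀ * N).mulVec v) := by
  symm
  rw [← mulVec_mulVec, dotProduct_mulVec, vecMul_transpose]

lemma quad_eq (n : ℕ) (M : MatN n) (v : Vn n) :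
    Om n (M.mulVec v) ((Matrix.J (Fin n) ℝ).mulVec (M.mulVec v)) =
      v ⬝ᵥ ((Mᵀ * M).mulVec v) := by
  have hJTJ : (Matrix.J (Fin n) ℝ)ᵀ * Matrix.J (Fin n) ℝ = 1 := by
    rw [Matrix.J_transpose, neg_mul, Matrix.J_squared, neg_neg]
  have h1 : Om n (M.mulVec v) ((Matrix.J (Fin n) ℝ).mulVec (M.mulVec v)) =
      ((Matrix.J (Fin n) ℝ * M).mulVec v) ⬝ᵥ ((Matrix.J (Fin n) ℝ * M).mulVec v) := by
    rw [Om, mulVec_mulVec]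
  have h2 : (Matrix.J (Fin n) ℝ * M)ᵀ * (Matrix.J (Fin n) ℝ * M) = Mᵀ * M := by
    rw [transpose_mul, mul_assoc, ← mul_assoc (Matrix.J (Fin n) ℝ)ᵀ, hJTJ, one_mul]
  rw [h1, dp_gram, h2]

/-- For `A` symplectic and `C_A := ½(A - J₀ A J₀)`, one has
`4 Ω₀(C_A v, J₀ C_A v) = 2 Ω₀(v, J₀ v) + Ω₀(A v, J₀ A v) + Ω₀(A J₀ v, J₀ A J₀ v)`,
and this quantity is strictly positive for `v ≠ 0`. -/
theorem cLinearPart_positivity (n : ℕ) (A : MatN n)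
    (hA : Aᵀ * Matrix.J (Fin n) ℝ * A = Matrix.J (Fin n) ℝ) (v : Vn n) :
    (4 * Om n (((1/2 : ℝ) • (A - Matrix.J (Fin n) ℝ * A * Matrix.J (Fin n) ℝ)).mulVec v)
        ((Matrix.J (Fin n) ℝ).mulVec
          (((1/2 : ℝ) • (A - Matrix.J (Fin n) ℝ * A * Matrix.J (Fin n) ℝ)).mulVec v)) =
      2 * Om n v ((Matrix.J (Fin n) ℝ).mulVec v) +
        Om n (A.mulVec v) ((Matrix.J (Fin n) ℝ).mulVec (A.mulVec v)) +
        Om n ((A * Matrix.J (Fin n) ℝ).mulVec v)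
          ((Matrix.J (Fin n) ℝ).mulVec ((A * Matrix.J (Fin n) ℝ).mulVec v))) ∧
    (v ≠ 0 →
      0 < 4 * Om n (((1/2 : ℝ) • (A - Matrix.J (Fin n) ℝ * A * Matrix.J (Fin n) ℝ)).mulVec v)
        ((Matrix.J (Fin n) ℝ).mulVec
          (((1/2 : ℝ) • (A - Matrix.J (Fin n) ℝ * A * Matrix.J (Fin n) ℝ)).mulVec v))) := by
  set Jm := Matrix.J (Fin n) ℝ with hJm
  have hJ2 : Jm * Jm = -1 := Matrix.J_squared _ _
  have hJT : Jmᵀ = -Jm := Matrix.J_transpose _ _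
  -- key matrix facts
  have h2 : Aᵀ * (Jm * A * Jm) = -1 := by
    rw [← mul_assoc, ← mul_assoc, hA, hJ2]
  have hT : (Jm * A * Jm)ᵀ = Jm * Aᵀ * Jm := by
    rw [transpose_mul, transpose_mul, hJT]
    simp [mul_assoc]
  have h3 : Jm * Aᵀ * Jm * A = -1 := by
    have := congrArg Matrix.transpose h2
    rw [transpose_mul, hT, transpose_transpose, transpose_neg, transpose_one] at this
    exact this
  have h4 : Jm * Aᵀ * Jm * (Jm * A * Jm) = (A * Jm)ᵀ * (A * Jm) := by
    have e1 : Jm * Aᵀ * Jm * (Jm * A * Jm) = Jm * Aᵀ * (Jm * Jm) * (A * Jm) := by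
      noncomm_ring
    rw [e1, hJ2, transpose_mul, hJT]
    noncomm_ring
  have expand : (A - Jm * A * Jm)ᵀ * (A - Jm * A * Jm) =
      (2 : ℝ) • (1 : MatN n) + Aᵀ * A + (A * Jm)ᵀ * (A * Jm) := by
    rw [transpose_sub, hT, sub_mul, mul_sub, mul_sub, h2, h3, h4, two_smul ℝ]
    abel
  set C : MatN n := (1/2 : ℝ) • (A - Jm * A * Jm) with hC
  have hCC : Cᵀ * C = (1/4 : ℝ) • ((A - Jm * A * Jm)ᵀ * (A - Jm * A * Jm)) := by
    rw [hC, transpose_smul, smul_mul_smul_comm]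
    norm_num
  -- the matrix identity
  have hmat : (4 : ℝ) • (Cᵀ * C) =
      (2 : ℝ) • (1 : MatN n) + Aᵀ * A + (A * Jm)ᵀ * (A * Jm) := by
    have h41 : (4 : ℝ) * (1/4 : ℝ) = 1 := by norm_num
    rw [hCC, smul_smul, h41, one_smul, expand]
  have key := congrArg (fun P : MatN n => v ⬝ᵥ P.mulVec v) hmat
  simp only [smul_mulVec, dotProduct_smul, add_mulVec, dotProduct_add,
    smul_eq_mul, one_mulVec] at key
  have e1 := quad_eq n C v
  have e2 := quad_eq n 1 v
  have e3 := quad_eq n A v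
  have e4 := quad_eq n (A * Jm) v
  rw [transpose_one, one_mul, one_mulVec] at e2
  have heq : 4 * Om n (C.mulVec v) (Jm.mulVec (C.mulVec v)) =
      2 * Om n v (Jm.mulVec v) + Om n (A.mulVec v) (Jm.mulVec (A.mulVec v)) +
        Om n ((A * Jm).mulVec v) (Jm.mulVec ((A * Jm).mulVec v)) := by
    rw [e1, e2, e3, e4, key]
  refine ⟨heq, fun hv => ?_⟩
  rw [heq]
  have hposv : 0 < Om n v (Jm.mulVec v) := by
    have hJv : Jm.mulVec v ≠ 0 := by
      intro h
      apply hv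
      have := congrArg (Jm.mulVec) h
      rw [mulVec_mulVec, hJ2, Matrix.mulVec_zero, Matrix.neg_mulVec, one_mulVec,
        neg_eq_zero] at this
      exact this
    have hrfl : Om n v (Jm.mulVec v) = (Jm.mulVec v) ⬝ᵥ (Jm.mulVec v) := rfl
    rw [hrfl]
    rcases lt_or_eq_of_le (dp_self_nonneg (Jm.mulVec v)) with h | h
    · exact h
    · exact absurd (dotProduct_self_eq_zero.mp h.symm) hJv
  have h3n : 0 ≤ Om n (A.mulVec v) (Jm.mulVec (A.mulVec v)) :=
    dp_self_nonneg (Jm.mulVec (A.mulVec v))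
  have h4n : 0 ≤ Om n ((A * Jm).mulVec v) (Jm.mulVec ((A * Jm).mulVec v)) :=
    dp_self_nonneg (Jm.mulVec ((A * Jm).mulVec v))
  linarith
end
end

section
/- Let A ∈ Sp(2n,ℝ), let λ ∈ {1, −1}, and let k ≥ 1 be an integer. Then the bilinear form Q̂ₖ defined on Ker((A − λ Id)^{2k}) by Q̂ₖ(v, w) = Ω₀((A − λ Id)^k v, (A − λ Id)^{k−1} w) is symmetric: Q̂ₖ(v, w) = Q̂ₖ(w, v) for all v, w ∈ Ker((A − λ Id)^{2k}). -/
open Matrix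

noncomputable section

/-!
Write `B = A - λ`. Since `A` preserves `Ω₀` and `λ² = 1`, expanding
`Ω₀((B + λ)x, (B + λ)y) = Ω₀(x, y)` gives `Ω₀(Bx, y) + Ω₀(x, By) = -λ Ω₀(Bx, By)`. Moving powers
of `B` across `Ω₀` with this relation shows that `Ω₀(Bᵃ v, Bᵇ w) = 0` whenever `a + b ≥ 2k` and
`B^{2k} w = 0`. Applying the relation once more to `B^{k-1} v, B^{k-1} w`, the right-hand side is
`Ω₀(Bᵏ v, Bᵏ w) = 0`, and antisymmetry of `Ω₀` turns what is left into the symmetry of `Q̂ₖ`.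
-/

section BilinearMap

variable {R V : Type*} [CommRing R] [AddCommGroup V] [Module R V] (ω : V →ₗ[R] V →ₗ[R] R)

theorem apply_sub_smul_one_add_apply_of_isometry {f : Module.End R V}
    (hf : ∀ x y, ω (f x) (f y) = ω x y) {lam : R} (hlam : lam * lam = 1) (x y : V) :
    ω ((f - lam • 1) x) y + ω x ((f - lam • 1) y) =
      -lam * ω ((f - lam • 1) x) ((f - lam • 1) y) := by
  simp only [LinearMap.sub_apply, LinearMap.smul_apply, Module.End.one_apply, map_sub,
    map_smul, smul_eq_mul, hf]
  linear_combination (lam * ω x y - ω (f x) y - ω x (f y)) * hlam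

variable {g : Module.End R V} {c : R} (hg : ∀ x y, ω (g x) y + ω x (g y) = c * ω (g x) (g y))
include hg

theorem apply_pow_apply_pow_eq_zero {N : ℕ} {w : V} (hw : (g ^ N) w = 0) {a b : ℕ}
    (hab : N ≤ a + b) (x : V) : ω ((g ^ a) x) ((g ^ b) w) = 0 := by
  have hvanish : ∀ b, N ≤ b → (g ^ b) w = 0 := fun b hb => by
    rw [← Nat.sub_add_cancel hb, pow_add, Module.End.mul_apply, hw, map_zero]
  -- descending induction on `b`, starting from `b ≥ N`
  suffices ∀ m a b, N ≤ a + b → N ≤ b + m → ω ((g ^ a) x) ((g ^ b) w) = 0 from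
    this N a b hab (by omega)
  intro m
  induction m with
  | zero => intro a b _ hb; rw [hvanish b hb, map_zero]
  | succ m ih =>
    intro a b hab hbm
    rcases a with _ | a
    · rw [hvanish b (by omega), map_zero]
    · have hstep := hg ((g ^ a) x) ((g ^ b) w)
      rw [← Module.End.mul_apply, ← Module.End.mul_apply, ← pow_succ', ← pow_succ',
        ih a (b + 1) (by omega) (by omega), ih (a + 1) (b + 1) (by omega) (by omega)] at hstep
      simpa using hstep

theorem apply_pow_apply_pow_pred_comm (hskew : ∀ x y, ω x y = -ω y x) {k : ℕ} (hk : 1 ≤ k)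
    {w : V} (hw : (g ^ (2 * k)) w = 0) (v : V) :
    ω ((g ^ k) v) ((g ^ (k - 1)) w) = ω ((g ^ k) w) ((g ^ (k - 1)) v) := by
  have hrel := hg ((g ^ (k - 1)) v) ((g ^ (k - 1)) w)
  simp only [← Module.End.mul_apply, ← pow_succ', Nat.sub_add_cancel hk,
    apply_pow_apply_pow_eq_zero ω hg hw (show 2 * k ≤ k + k by omega), mul_zero] at hrel
  rw [hskew ((g ^ k) w)]
  linear_combination hrel

end BilinearMap

theorem toLinearMap₂'_mulVec_mulVec {R ι : Type*} [CommRing R] [Fintype ι] [DecidableEq ι]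
    {M A : Matrix ι ι R} (hA : Aᵀ * M * A = M) (x y : ι → R) :
    toLinearMap₂' R M (A *ᵥ x) (A *ᵥ y) = toLinearMap₂' R M x y := by
  rw [← toLin'_apply, ← toLin'_apply, ← LinearMap.compl₁₂_apply, toLinearMap₂'_comp, hA]

theorem Om_eq_toLinearMap₂' {n : ℕ} (x y : Vn n) :
    Om n x y = toLinearMap₂' ℝ (J (Fin n) ℝ)ᵀ x y := by
  rw [toLinearMap₂'_apply', dotProduct_mulVec, vecMul_transpose, Om]

theorem Om_antisymm {n : ℕ} (x y : Vn n) : Om n x y = -Om n y x := by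
  rw [Om, Om, dotProduct_comm, dotProduct_mulVec, ← mulVec_transpose, J_transpose, neg_mulVec,
    neg_dotProduct]

theorem Qhat_symmetric_general (n : ℕ) (A : MatN n)
    (hA : Aᵀ * Matrix.J (Fin n) ℝ * A = Matrix.J (Fin n) ℝ)
    (lam : ℝ) (hlam : lam = 1 ∨ lam = -1) (k : ℕ) (hk : 1 ≤ k)
    (v w : Vn n)
    (hw : ((A - lam • (1 : MatN n)) ^ (2 * k)).mulVec w = 0) :
    Om n (((A - lam • (1 : MatN n)) ^ k).mulVec v)
        (((A - lam • (1 : MatN n)) ^ (k - 1)).mulVec w) =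
      Om n (((A - lam • (1 : MatN n)) ^ k).mulVec w)
        (((A - lam • (1 : MatN n)) ^ (k - 1)).mulVec v) := by
  set ω : Vn n →ₗ[ℝ] Vn n →ₗ[ℝ] ℝ := toLinearMap₂' ℝ (J (Fin n) ℝ)ᵀ
  have hskew (x y : Vn n) : ω x y = -ω y x := by
    simpa only [Om_eq_toLinearMap₂'] using Om_antisymm x y
  have hA' : Aᵀ * (J (Fin n) ℝ)ᵀ * A = (J (Fin n) ℝ)ᵀ := by
    simpa only [transpose_mul, transpose_transpose, Matrix.mul_assoc] using
      congrArg transpose hA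
  have hlam2 : lam * lam = 1 := by rcases hlam with rfl | rfl <;> norm_num
  have hg := apply_sub_smul_one_add_apply_of_isometry ω (f := toLin' A)
    (fun x y => by simpa only [toLin'_apply] using toLinearMap₂'_mulVec_mulVec hA' x y) hlam2
  have hsub : toLin' A - lam • 1 = toLin' (A - lam • (1 : MatN n)) := by
    rw [map_sub, map_smul, toLin'_one, Module.End.one_eq_id]
  rw [hsub] at hg
  have hw' : (toLin' (A - lam • (1 : MatN n)) ^ (2 * k)) w = 0 := by
    rwa [← toLin'_pow, toLin'_apply]
  simpa only [Om_eq_toLinearMap₂', ← toLin'_pow, toLin'_apply] using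
    apply_pow_apply_pow_pred_comm ω hg hskew hk hw' v

/-- For a symplectic matrix `A`, `λ = ±1` and `k ≥ 1`, the bilinear form
`Q̂ₖ(v,w) = Ω₀((A - λ Id)^k v, (A - λ Id)^{k-1} w)` on `Ker((A - λ Id)^{2k})`
is symmetric. -/
theorem Qhat_symmetric (n : ℕ) (A : MatN n)
    (hA : Aᵀ * Matrix.J (Fin n) ℝ * A = Matrix.J (Fin n) ℝ)
    (lam : ℝ) (hlam : lam = 1 ∨ lam = -1) (k : ℕ) (hk : 1 ≤ k)
    (v w : Vn n)
    (hv : ((A - lam • (1 : MatN n)) ^ (2 * k)).mulVec v = 0)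
    (hw : ((A - lam • (1 : MatN n)) ^ (2 * k)).mulVec w = 0) :
    Om n (((A - lam • (1 : MatN n)) ^ k).mulVec v)
        (((A - lam • (1 : MatN n)) ^ (k - 1)).mulVec w) =
      Om n (((A - lam • (1 : MatN n)) ^ k).mulVec w)
        (((A - lam • (1 : MatN n)) ^ (k - 1)).mulVec v) :=
  Qhat_symmetric_general n A hA lam hlam k hk v w hw
end
end

section
/- For every integer m ≥ 1 and every t ∈ ℝ, let F_m(t) be the m×m real matrix with entries F_{ij}(t) = (t−1)^{j−i+1} e^{−(j−i+2)t} when j ≥ i, F_{ij}(t) = e^{−t} − 1 when j = i − 1, and F_{ij}(t) = 0 when j < i − 1. Then det F_m(t) = (t−1)^m e^{−(m+1)t}. -/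
open Matrix

noncomputable section

/-- the upper Hessenberg matrix `F_m(t)` with entries
`(t-1)^{j-i+1} e^{-(j-i+2)t}` for `j ≥ i`, `e^{-t} - 1` on the subdiagonal,
and `0` below the subdiagonal. -/
def Fmat (m : ℕ) (t : ℝ) : Matrix (Fin m) (Fin m) ℝ := Matrix.of fun i j =>
  if i.val ≤ j.val then
    (t - 1) ^ (j.val - i.val + 1) * Real.exp (-((j.val - i.val + 2 : ℕ) : ℝ) * t)
  else if j.val + 1 = i.val then Real.exp (-t) - 1
  else 0

/-! With `b = (t - 1) e^{-t}`, every entry on or above the diagonal is `b^{j-i+1} e^{-t}`, so the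
matrix is Toeplitz. Subtracting `b` times row `1` from row `0` clears row `0` except for its first
entry, which becomes `b`; expanding along row `0` leaves `F_{m-1}`, whence
`det F_m = b^{m-1} det F_1 = b^m e^{-t}`. -/

theorem Real.exp_neg_natCast_mul (n : ℕ) (t : ℝ) : Real.exp (-(n : ℝ) * t) = Real.exp (-t) ^ n := by
  rw [← Real.exp_nat_mul]
  ring_nf

theorem Matrix.det_succ_of_row_zero_eq_single {R : Type*} [CommRing R] {n : ℕ}
    (A : Matrix (Fin (n + 1)) (Fin (n + 1)) R) {d : R} (h : A 0 = Pi.single 0 d) :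
    A.det = d * (A.submatrix Fin.succ Fin.succ).det := by
  rw [det_succ_row_zero, Fin.sum_univ_succ, h]
  simp [Fin.succ_ne_zero]

namespace Fmat

variable {m : ℕ} {t : ℝ}

theorem apply_of_le {i j : Fin m} (h : i.val ≤ j.val) :
    Fmat m t i j = ((t - 1) * Real.exp (-t)) ^ (j.val - i.val + 1) * Real.exp (-t) := by
  simp only [Fmat, of_apply, if_pos h, Real.exp_neg_natCast_mul, mul_pow]
  ring

theorem apply_one_zero : Fmat (m + 2) t 1 0 = Real.exp (-t) - 1 := by
  simp [Fmat]

theorem apply_succ_succ (i j : Fin m) : Fmat (m + 1) t i.succ j.succ = Fmat m t i j := by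
  simp only [Fmat, of_apply, Fin.val_succ, Nat.add_le_add_iff_right, Nat.add_right_cancel_iff,
    Nat.add_sub_add_right]

theorem submatrix_succ_succ : (Fmat (m + 1) t).submatrix Fin.succ Fin.succ = Fmat m t :=
  Matrix.ext fun i j => apply_succ_succ i j

theorem row_zero_add_smul_row_one :
    Fmat (m + 2) t 0 + (-((t - 1) * Real.exp (-t))) • Fmat (m + 2) t 1
      = Pi.single 0 ((t - 1) * Real.exp (-t)) := by
  set b := (t - 1) * Real.exp (-t)
  funext j
  simp only [Pi.add_apply, Pi.smul_apply, smul_eq_mul]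
  rcases Fin.eq_zero_or_eq_succ j with rfl | ⟨j, rfl⟩
  · rw [apply_of_le le_rfl, apply_one_zero, Pi.single_eq_same]
    simp only [Fin.val_zero, Nat.sub_self, zero_add, pow_one, b]
    ring
  · rw [apply_of_le (Nat.zero_le _), apply_of_le (by simp), Pi.single_eq_of_ne (Fin.succ_ne_zero j)]
    simp only [Fin.val_zero, Fin.val_succ, Fin.val_one, Nat.sub_zero, Nat.add_sub_cancel]
    ring

theorem det_succ_succ :
    (Fmat (m + 2) t).det = (t - 1) * Real.exp (-t) * (Fmat (m + 1) t).det := by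
  rw [← det_updateRow_add_smul_self _ (zero_ne_one' (Fin (m + 2))),
    det_succ_of_row_zero_eq_single _ (by rw [updateRow_self]; exact row_zero_add_smul_row_one),
    ← Fin.succAbove_zero, submatrix_updateRow_succAbove, Fin.succAbove_zero, submatrix_succ_succ]

end Fmat

/-- `det F_m(t) = (t-1)^m e^{-(m+1)t}` for every `m ≥ 1` and `t ∈ ℝ`. -/
theorem det_Fmat (m : ℕ) (hm : 1 ≤ m) (t : ℝ) :
    (Fmat m t).det = (t - 1) ^ m * Real.exp (-((m + 1 : ℕ) : ℝ) * t) := by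
  obtain ⟨k, rfl⟩ := Nat.exists_eq_add_of_le' hm
  rw [Real.exp_neg_natCast_mul]
  induction k with
  | zero =>
    rw [det_fin_one, Fmat.apply_of_le le_rfl, Nat.sub_self]
    ring
  | succ k ih =>
    rw [Fmat.det_succ_succ, ih (Nat.le_add_left 1 k)]
    ring
end
end

section
/- Let r ≥ 1 be an integer and d ∈ {−1, 0, 1}. For t ∈ [0,1], let D(t) be the r×r upper bidiagonal matrix with diagonal entries D₁₁ = 1 and D_{ii} = e^t for 2 ≤ i ≤ r, superdiagonal entries D_{i,i+1} = 1 − t for 1 ≤ i ≤ r−1, and all other entries 0; let C(t) be the r×r diagonal matrix diag(t·d, 0, …, 0, (1−t)·d) (for r = 1 take C(t) = (d)). Define the 2r×2r matrix ψ(t) = [[D(t)⁻¹, D(t)⁻¹ C(t)],[0, D(t)ᵀ]]. Then for every t ∈ [0,1]: if d = ±1 then dim Ker(ψ(t) − I_{2r}) = 1, and if d = 0 then dim Ker(ψ(t) − I_{2r}) = 2. -/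
open Matrix

noncomputable section

/-- the `r×r` upper bidiagonal matrix with diagonal `(1, e^t, …, e^t)` and
superdiagonal entries `1 - t` -/
def Dmat (r : ℕ) (t : ℝ) : Matrix (Fin r) (Fin r) ℝ := Matrix.of fun i j =>
  if i = j then (if i.val = 0 then 1 else Real.exp t)
  else if j.val = i.val + 1 then 1 - t
  else 0

/-- the `r×r` diagonal matrix `diag(t·d, 0, …, 0, (1-t)·d)`
(equal to `(d)` when `r = 1`) -/
def Cmat (r : ℕ) (d : ℝ) (t : ℝ) : Matrix (Fin r) (Fin r) ℝ := Matrix.of fun i j =>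
  if i = j then
    (if r = 1 then d
     else if i.val = 0 then t * d
     else if i.val = r - 1 then (1 - t) * d
     else 0)
  else 0

/-- the `2r×2r` symplectic matrix `ψ(t) = [[D(t)⁻¹, D(t)⁻¹ C(t)],[0, D(t)ᵀ]]` -/
def psiPath (r : ℕ) (d : ℝ) (t : ℝ) :
    Matrix (Fin r ⊕ Fin r) (Fin r ⊕ Fin r) ℝ :=
  Matrix.fromBlocks (Dmat r t)⁻¹ ((Dmat r t)⁻¹ * Cmat r d t) 0 (Dmat r t)ᵀ

/-!
Put `N = 1 - D`. Then `ψ - 1 = diag(D⁻¹, -1) · [[N, C], [0, Nᵀ]]`, and the kernel of a block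
upper triangular matrix has dimension `dim ker N + dim {y ∈ ker Nᵀ | C y ∈ range N}`.
`ker N` and `ker Nᵀ` have the same dimension, which is 1: `e₀ ∈ ker N`, and a fixed vector of
`Dᵀ` is determined by its first entry when `t ≠ 0` and by its last one when `t = 0`. For `d = 0` the second space is
`ker Nᵀ`, giving dimension 2. For `d ≠ 0` it is zero: `C y = N x` and `Nᵀ y = 0` give
`0 = y ⬝ N x = y ⬝ C y = d (t y₀² + (1 - t) y_{r-1}²)`, and for `t ∈ [0, 1]` this kills the entry
that determines `y`.
-/

open Module LinearMap

theorem Submodule.finrank_map_add_finrank_inf_ker {K V U : Type*} [Field K] [AddCommGroup V]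
    [Module K V] [FiniteDimensional K V] [AddCommGroup U] [Module K U]
    (P : Submodule K V) (f : V →ₗ[K] U) :
    finrank K (P.map f) + finrank K ↥(P ⊓ ker f) = finrank K P := by
  rw [← range_domRestrict, ← (f.domRestrict P).finrank_range_add_finrank_ker,
    ← Submodule.map_comap_subtype, ker_domRestrict, Submodule.finrank_map_subtype_eq]

namespace Matrix

variable {K m n p q : Type*} [Field K] [Fintype n] [Fintype p]

theorem fromBlocks_zero₂₁_mulVec_sumElim_eq_zero_iff (A : Matrix m n K) (C : Matrix m p K)
    (B : Matrix q p K) (x : n → K) (y : p → K) :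
    fromBlocks A C 0 B *ᵥ Sum.elim x y = 0 ↔ A *ᵥ x + C *ᵥ y = 0 ∧ B *ᵥ y = 0 := by
  simp only [fromBlocks_mulVec, Sum.elim_comp_inl, Sum.elim_comp_inr, zero_mulVec, zero_add,
    funext_iff, Sum.forall, Sum.elim_inl, Sum.elim_inr, Pi.zero_apply]

theorem finrank_ker_fromBlocks_zero₂₁ (A : Matrix m n K) (C : Matrix m p K) (B : Matrix q p K) :
    finrank K (ker (fromBlocks A C 0 B).mulVecLin) =
      finrank K (ker A.mulVecLin) +
        finrank K ↥(ker B.mulVecLin ⊓ (range A.mulVecLin).comap C.mulVecLin) := by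
  let ι : (n → K) →ₗ[K] (n ⊕ p → K) :=
    (LinearEquiv.sumArrowLequivProdArrow n p K K).symm.toLinearMap ∘ₗ LinearMap.inl K _ _
  have hι : Function.Injective ι := fun x x' h => funext fun i => congrFun h (Sum.inl i)
  have hker : ker (fromBlocks A C 0 B).mulVecLin ⊓ ker (funLeft K K Sum.inr) =
      (ker A.mulVecLin).map ι := by
    ext v
    simp only [Submodule.mem_inf, mem_ker, Submodule.mem_map, mulVecLin_apply]
    constructor
    · rintro ⟨hv, hy⟩
      have hy' : v ∘ Sum.inr = 0 := hy
      rw [← Sum.elim_comp_inl_inr v, hy', fromBlocks_zero₂₁_mulVec_sumElim_eq_zero_iff,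
        mulVec_zero, add_zero] at hv
      exact ⟨v ∘ Sum.inl, hv.1, by rw [← Sum.elim_comp_inl_inr v, hy']; rfl⟩
    · rintro ⟨x, hx, rfl⟩
      refine ⟨(fromBlocks_zero₂₁_mulVec_sumElim_eq_zero_iff A C B x 0).2 ?_, rfl⟩
      simp [hx]
  have hrange : (ker (fromBlocks A C 0 B).mulVecLin).map (funLeft K K Sum.inr) =
      ker B.mulVecLin ⊓ (range A.mulVecLin).comap C.mulVecLin := by
    ext y
    simp only [Submodule.mem_map, Submodule.mem_inf, Submodule.mem_comap, mem_ker, mem_range,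
      mulVecLin_apply]
    constructor
    · rintro ⟨v, hv, rfl⟩
      rw [← Sum.elim_comp_inl_inr v, fromBlocks_zero₂₁_mulVec_sumElim_eq_zero_iff] at hv
      exact ⟨hv.2, -(v ∘ Sum.inl), by rw [mulVec_neg, neg_eq_iff_add_eq_zero]; exact hv.1⟩
    · rintro ⟨hB, x, hx⟩
      refine ⟨Sum.elim (-x) y, ?_, rfl⟩
      rw [fromBlocks_zero₂₁_mulVec_sumElim_eq_zero_iff, mulVec_neg, hx, neg_add_cancel]
      exact ⟨rfl, hB⟩
  rw [← Submodule.finrank_map_add_finrank_inf_ker _ (funLeft K K Sum.inr), hker, hrange,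
    (Submodule.equivMapOfInjective ι hι _).finrank_eq.symm, add_comm]

theorem finrank_ker_mulVecLin_transpose [Fintype m] (A : Matrix m m K) :
    finrank K (ker Aᵀ.mulVecLin) = finrank K (ker A.mulVecLin) := by
  have h := Aᵀ.mulVecLin.finrank_range_add_finrank_ker
  have h' := A.mulVecLin.finrank_range_add_finrank_ker
  rw [← rank, rank_transpose] at h
  rw [← rank] at h'
  omega

theorem ker_mulVecLin_mul_of_isUnit [Fintype m] [DecidableEq m] {P : Matrix m m K} (hP : IsUnit P)
    (Q : Matrix m n K) :
    ker (P * Q).mulVecLin = ker Q.mulVecLin := by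
  rw [mulVecLin_mul, ker_comp_of_ker_eq_bot]
  exact ker_eq_bot.2 (mulVec_injective_iff_isUnit.2 hP)

theorem dotProduct_mulVec_eq_zero_of_mem_ker_transpose [Fintype m] {A : Matrix m n K}
    {y : m → K} (hy : y ∈ ker Aᵀ.mulVecLin) (x : n → K) : y ⬝ᵥ (A *ᵥ x) = 0 := by
  rw [dotProduct_mulVec, ← mulVec_transpose, ← mulVecLin_apply, mem_ker.1 hy, zero_dotProduct]

end Matrix

namespace Dmat

variable {r n : ℕ} {t : ℝ}

theorem isUpperTriangular : (Dmat r t).IsUpperTriangular := by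
  intro i j hji
  have hij : i ≠ j := (ne_of_lt hji).symm
  have : (j : ℕ) ≠ i + 1 := by have : (j : ℕ) < i := hji; omega
  simp [Dmat, hij, this]

theorem det_ne_zero : (Dmat r t).det ≠ 0 := by
  rw [det_of_isUpperTriangular isUpperTriangular]
  refine Finset.prod_ne_zero_iff.2 fun i _ => ?_
  simp only [Dmat, of_apply, ↓reduceIte]
  split_ifs
  exacts [one_ne_zero, Real.exp_ne_zero t]

theorem mulVec_single_zero : Dmat (n + 1) t *ᵥ Pi.single 0 1 = Pi.single 0 1 := by
  ext i
  rw [mulVec_single_one, col_apply]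
  simp only [Dmat, of_apply, Fin.val_zero, Pi.single_apply]
  split_ifs <;> simp_all

theorem transpose_mulVec_succ (y : Fin (n + 1) → ℝ) (i : Fin n) :
    ((Dmat (n + 1) t)ᵀ *ᵥ y) i.succ = Real.exp t * y i.succ + (1 - t) * y i.castSucc := by
  have hrow : (fun k => (Dmat (n + 1) t)ᵀ i.succ k) =
      Pi.single i.succ (Real.exp t) + Pi.single i.castSucc (1 - t) := by
    ext k
    simp only [transpose_apply, Dmat, of_apply, Pi.add_apply, Pi.single_apply, Fin.ext_iff,
      Fin.val_succ, Fin.val_castSucc]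
    split_ifs <;> first | omega | simp
  rw [mulVec, hrow, add_dotProduct, single_dotProduct, single_dotProduct]

theorem eq_zero_of_transpose_mulVec_eq_self_of_apply_zero (ht : t ≠ 0) {y : Fin (n + 1) → ℝ}
    (hy : (Dmat (n + 1) t)ᵀ *ᵥ y = y) (h0 : y 0 = 0) : y = 0 := by
  have hexp : Real.exp t - 1 ≠ 0 := sub_ne_zero.2 ((Real.exp_eq_one_iff t).not.2 ht)
  ext i
  rw [Pi.zero_apply]
  induction i using Fin.induction with
  | zero => exact h0
  | succ i ih =>
    have hrow := transpose_mulVec_succ (t := t) y i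
    rw [hy, ih] at hrow
    have : (Real.exp t - 1) * y i.succ = 0 := by linear_combination -hrow
    exact (mul_eq_zero.1 this).resolve_left hexp

theorem eq_zero_of_transpose_mulVec_eq_self_of_apply_last {y : Fin (n + 1) → ℝ}
    (hy : (Dmat (n + 1) 0)ᵀ *ᵥ y = y) (hl : y (Fin.last n) = 0) : y = 0 := by
  ext i
  rw [Pi.zero_apply]
  induction i using Fin.lastCases with
  | last => exact hl
  | cast i =>
    have hrow := transpose_mulVec_succ (t := 0) y i
    rw [hy, Real.exp_zero] at hrow
    linear_combination -hrow

end Dmat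

namespace Cmat

variable {n : ℕ} {d t : ℝ}

-- For `r = 1` both entries sit at the same index and add up to `d`.
theorem eq_diagonal :
    Cmat (n + 1) d t = diagonal (Pi.single 0 (t * d) + Pi.single (Fin.last n) ((1 - t) * d)) := by
  ext i j
  simp only [Cmat, diagonal, of_apply, Pi.add_apply, Pi.single_apply, Fin.ext_iff, Fin.val_zero,
    Fin.val_last]
  split_ifs <;> first | omega | ring

theorem dotProduct_mulVec_self (y : Fin (n + 1) → ℝ) :
    y ⬝ᵥ (Cmat (n + 1) d t *ᵥ y) = d * (t * y 0 ^ 2 + (1 - t) * y (Fin.last n) ^ 2) := by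
  simp only [eq_diagonal, mulVec_diagonal, dotProduct, Pi.add_apply, add_mul, mul_add,
    Finset.sum_add_distrib, Pi.single_apply, ite_mul, zero_mul, mul_ite, mul_zero,
    Finset.sum_ite_eq', Finset.mem_univ, if_true]
  ring

end Cmat

theorem ker_psiPath_sub_one (r : ℕ) (d t : ℝ) :
    ker (psiPath r d t - 1).mulVecLin =
      ker (fromBlocks (1 - Dmat r t) (Cmat r d t) 0 (1 - Dmat r t)ᵀ).mulVecLin := by
  have hD : IsUnit (Dmat r t).det := isUnit_iff_ne_zero.2 Dmat.det_ne_zero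
  have hfactor : psiPath r d t - 1 = fromBlocks (Dmat r t)⁻¹ 0 0 (-1) *
      fromBlocks (1 - Dmat r t) (Cmat r d t) 0 (1 - Dmat r t)ᵀ := by
    rw [psiPath, ← fromBlocks_one, sub_eq_add_neg, fromBlocks_neg, fromBlocks_add,
      fromBlocks_multiply]
    congr 1 <;> simp only [mul_sub, nonsing_inv_mul _ hD, mul_one, zero_mul, mul_zero, add_zero,
      zero_add, neg_zero, neg_one_mul, transpose_sub, transpose_one] <;> abel
  rw [hfactor, ker_mulVecLin_mul_of_isUnit]
  rw [Matrix.isUnit_iff_isUnit_det, det_fromBlocks_zero₂₁, det_nonsing_inv, det_neg, det_one]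
  simp [Dmat.det_ne_zero]

theorem mem_ker_one_sub_Dmat_transpose_iff {r : ℕ} {t : ℝ} (y : Fin r → ℝ) :
    y ∈ ker (1 - Dmat r t)ᵀ.mulVecLin ↔ (Dmat r t)ᵀ *ᵥ y = y := by
  rw [mem_ker, mulVecLin_apply, transpose_sub, transpose_one, sub_mulVec, one_mulVec, sub_eq_zero,
    eq_comm]

theorem finrank_ker_one_sub_Dmat_transpose_le_one (n : ℕ) (t : ℝ) :
    finrank ℝ (ker (1 - Dmat (n + 1) t)ᵀ.mulVecLin) ≤ 1 := by
  obtain ⟨j, hj⟩ : ∃ j, ∀ y ∈ ker (1 - Dmat (n + 1) t)ᵀ.mulVecLin, y j = 0 → y = 0 := by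
    simp_rw [mem_ker_one_sub_Dmat_transpose_iff]
    rcases eq_or_ne t 0 with rfl | ht
    · exact ⟨Fin.last n, fun y hy => Dmat.eq_zero_of_transpose_mulVec_eq_self_of_apply_last hy⟩
    · exact ⟨0, fun y hy => Dmat.eq_zero_of_transpose_mulVec_eq_self_of_apply_zero ht hy⟩
  let ev := (LinearMap.proj j : (Fin (n + 1) → ℝ) →ₗ[ℝ] ℝ) ∘ₗ
    (ker (1 - Dmat (n + 1) t)ᵀ.mulVecLin).subtype
  have hev : Function.Injective ev :=
    (injective_iff_map_eq_zero ev).2 fun y hy => Subtype.ext (hj y y.2 hy)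
  simpa using LinearMap.finrank_le_finrank_of_injective hev

theorem finrank_ker_one_sub_Dmat (n : ℕ) (t : ℝ) :
    finrank ℝ (ker (1 - Dmat (n + 1) t).mulVecLin) = 1 := by
  refine le_antisymm ?_ (Submodule.one_le_finrank_iff.2 ?_)
  · rw [← finrank_ker_mulVecLin_transpose]
    exact finrank_ker_one_sub_Dmat_transpose_le_one n t
  · refine (Submodule.ne_bot_iff _).2 ⟨Pi.single 0 1, ?_, Pi.single_ne_zero_iff.2 one_ne_zero⟩
    rw [mem_ker, mulVecLin_apply, sub_mulVec, one_mulVec, Dmat.mulVec_single_zero, sub_self]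

theorem ker_one_sub_Dmat_transpose_inf_comap_Cmat_eq_bot {n : ℕ} {d t : ℝ}
    (ht : t ∈ Set.Icc (0 : ℝ) 1) (hd : d ≠ 0) :
    ker (1 - Dmat (n + 1) t)ᵀ.mulVecLin ⊓
      (range (1 - Dmat (n + 1) t).mulVecLin).comap (Cmat (n + 1) d t).mulVecLin = ⊥ := by
  refine (Submodule.eq_bot_iff _).2 fun y ⟨hy, x, hx⟩ => ?_
  have hQ : y ⬝ᵥ (Cmat (n + 1) d t *ᵥ y) = 0 := by
    rw [← mulVecLin_apply, ← hx]
    exact dotProduct_mulVec_eq_zero_of_mem_ker_transpose hy x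
  rw [Cmat.dotProduct_mulVec_self, mul_eq_zero, or_iff_right hd] at hQ
  obtain ⟨h0, hl⟩ := (add_eq_zero_iff_of_nonneg (mul_nonneg ht.1 (sq_nonneg _))
    (mul_nonneg (sub_nonneg.2 ht.2) (sq_nonneg _))).1 hQ
  rw [SetLike.mem_coe, mem_ker_one_sub_Dmat_transpose_iff] at hy
  rcases eq_or_ne t 0 with rfl | ht0
  · exact Dmat.eq_zero_of_transpose_mulVec_eq_self_of_apply_last hy (by simpa using hl)
  · exact Dmat.eq_zero_of_transpose_mulVec_eq_self_of_apply_zero ht0 hy (by simpa [ht0] using h0)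

theorem psiPath_ker_dim_general (r : ℕ) (hr : 1 ≤ r) (d : ℝ)
    (t : ℝ) (ht : t ∈ Set.Icc (0:ℝ) 1) :
    ((d = 1 ∨ d = -1) →
      Module.finrank ℝ (LinearMap.ker (psiPath r d t - 1).mulVecLin) = 1) ∧
    (d = 0 →
      Module.finrank ℝ (LinearMap.ker (psiPath r d t - 1).mulVecLin) = 2) := by
  obtain ⟨n, rfl⟩ : ∃ n, r = n + 1 := ⟨r - 1, by omega⟩
  rw [ker_psiPath_sub_one, finrank_ker_fromBlocks_zero₂₁, finrank_ker_one_sub_Dmat]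
  refine ⟨fun hd => ?_, fun hd => ?_⟩
  · have hd0 : d ≠ 0 := by rcases hd with rfl | rfl <;> norm_num
    rw [ker_one_sub_Dmat_transpose_inf_comap_Cmat_eq_bot ht hd0, finrank_bot]
  · have hC : Cmat (n + 1) d t = 0 := by simp [Cmat.eq_diagonal, hd]
    rw [hC, mulVecLin_zero, Submodule.comap_zero, inf_top_eq, finrank_ker_mulVecLin_transpose,
      finrank_ker_one_sub_Dmat]

/-- Along the path `ψ(t)`, the kernel of `ψ(t) - Id` has constant dimension:
`1` if `d = ±1` and `2` if `d = 0`, for all `t ∈ [0,1]`. -/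
theorem psiPath_ker_dim (r : ℕ) (hr : 1 ≤ r) (d : ℝ)
    (hd : d = -1 ∨ d = 0 ∨ d = 1) (t : ℝ) (ht : t ∈ Set.Icc (0:ℝ) 1) :
    ((d = 1 ∨ d = -1) →
      Module.finrank ℝ (LinearMap.ker (psiPath r d t - 1).mulVecLin) = 1) ∧
    (d = 0 →
      Module.finrank ℝ (LinearMap.ker (psiPath r d t - 1).mulVecLin) = 2) :=
  psiPath_ker_dim_general r hr d t ht

end
end
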